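/- There exists a central hyperplane arrangement 𝒜 in ℂ³ and a hyperplane H ∈ 𝒜 that is neither a loop nor a coloop, such that dim(C_{𝒜,k})₁ = 0 while dim(C_{𝒜/H,k})₁ = 1 for k = −2m ≤ −6; consequently no surjection of graded vector spaces C_{𝒜,k} → C_{𝒜/H,k} can exist, and the deletion–contraction sequence 0 → C_{𝒜∖H,k}(−1) → C_{𝒜,k} → C_{𝒜/H,k} → 0 is not exact. -/

import Mathlib

/-!
Take three pencils of `n ≥ 4` planes through the three coordinate axes of `ℂ³`. A nonzero point
of an axis lies exactly on the `n` planes through that axis, and a point off the axes lies on at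
most one plane of each pencil; hence `ρ = 2n` on the axes and `ρ ≥ 3n - 3 > 2n` elsewhere. For
`k = -2n` the exponent `ρ(h) + k + 1` is therefore `1` on the axes and at least `2` elsewhere,
while on linear forms `∂_h f = f(h)` is a constant. So `(C_{𝒜,k})₁` consists of the linear forms
vanishing on the three axes, which is `0`. The plane `H = {x₁ + x₂ = 0}` meets only the
`x₀`-axis and `ρ_{𝒜/H} = ρ_𝒜` on `H`, so `(C_{𝒜/H,k})₁` is the line of linear forms on `H`
vanishing on that axis.
-/

open MvPolynomial

/-- The directional derivative ∂_h on polynomials on ℂᵈ. -/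
noncomputable def dirDeriv {d : ℕ} (h : Fin d → ℂ) :
    Module.End ℂ (MvPolynomial (Fin d) ℂ) :=
  ∑ i, h i • (pderiv i).toLinearMap

open Classical in
/-- ρ_𝒜(h): the number of hyperplanes of the arrangement not containing `h`. -/
noncomputable def rhoA {d : ℕ} {ι : Type*} [Fintype ι]
    (L : ι → ((Fin d → ℂ) →ₗ[ℂ] ℂ)) (h : Fin d → ℂ) : ℕ :=
  (Finset.univ.filter fun i => L i h ≠ 0).card

/-- The degree-1 graded component of the inverse system C_{𝒜,k}. -/
noncomputable def Cdeg1 {d : ℕ} {ι : Type*} [Fintype ι]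
    (L : ι → ((Fin d → ℂ) →ₗ[ℂ] ℂ)) (k : ℤ) :
    Submodule ℂ (MvPolynomial (Fin d) ℂ) :=
  (homogeneousSubmodule (Fin d) ℂ 1) ⊓
    ⨅ (h : Fin d → ℂ) (_ : h ≠ 0),
      LinearMap.ker (dirDeriv h ^ (((rhoA L h : ℤ) + k + 1).toNat))

open Finset

namespace MvPolynomial

variable {R σ : Type*} [CommSemiring R] {φ : MvPolynomial σ R}

lemma IsHomogeneous.eq_C_coeff_zero (hφ : φ.IsHomogeneous 0) : φ = C (φ.coeff 0) :=
  totalDegree_eq_zero_iff_eq_C.1 (Nat.le_zero.1 hφ.totalDegree_le)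

variable [Fintype σ]

lemma IsHomogeneous.eval_eq_sum_mul_coeff_pderiv (hφ : φ.IsHomogeneous 1) (x : σ → R) :
    eval x φ = ∑ i, x i * (pderiv i φ).coeff 0 := by
  conv_lhs => rw [← one_smul ℕ φ, ← hφ.sum_X_mul_pderiv]
  simp only [map_sum, map_mul, eval_X]
  refine Finset.sum_congr rfl fun i _ => ?_
  rw [(hφ.pderiv (i := i)).eq_C_coeff_zero, eval_C, coeff_zero_C]

variable [DecidableEq σ]

lemma IsHomogeneous.pderiv_eq_C_eval_single (hφ : φ.IsHomogeneous 1) (i : σ) :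
    pderiv i φ = C (eval (Pi.single i 1) φ) := by
  rw [hφ.eval_eq_sum_mul_coeff_pderiv, Finset.sum_eq_single i (fun j _ hj => by simp [hj])
    (by simp), Pi.single_eq_same, one_mul]
  exact (hφ.pderiv (i := i)).eq_C_coeff_zero

lemma IsHomogeneous.eval_eq_sum (hφ : φ.IsHomogeneous 1) (x : σ → R) :
    eval x φ = ∑ i, x i * eval (Pi.single i 1) φ := by
  simp only [hφ.eval_eq_sum_mul_coeff_pderiv x, hφ.pderiv_eq_C_eval_single, coeff_zero_C]

lemma IsHomogeneous.eq_sum_C_mul_X (hφ : φ.IsHomogeneous 1) :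
    φ = ∑ i, C (eval (Pi.single i 1) φ) * X i := by
  conv_lhs => rw [← one_smul ℕ φ, ← hφ.sum_X_mul_pderiv]
  simp only [hφ.pderiv_eq_C_eval_single, mul_comm]

lemma mem_span_X_one_iff {K : Type*} [Field K] {f : MvPolynomial (Fin 2) K} :
    f ∈ Submodule.span K {X 1} ↔ f.IsHomogeneous 1 ∧ eval (Pi.single 0 1) f = 0 := by
  constructor
  · rintro hf
    obtain ⟨a, rfl⟩ := Submodule.mem_span_singleton.1 hf
    exact ⟨by simpa [smul_eq_C_mul] using (isHomogeneous_X K (1 : Fin 2)).C_mul a, by simp⟩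
  · rintro ⟨hf, h₀⟩
    rw [hf.eq_sum_C_mul_X, Fin.sum_univ_two, h₀, map_zero, zero_mul, zero_add, ← smul_eq_C_mul]
    exact Submodule.smul_mem _ _ (Submodule.mem_span_singleton_self _)

end MvPolynomial

section DirectionalDerivative

variable {d : ℕ} {f : MvPolynomial (Fin d) ℂ}

lemma dirDeriv_apply (h : Fin d → ℂ) (f : MvPolynomial (Fin d) ℂ) :
    dirDeriv h f = ∑ i, h i • pderiv i f := by
  simp [dirDeriv, LinearMap.sum_apply]

lemma dirDeriv_C (h : Fin d → ℂ) (a : ℂ) : dirDeriv h (C a) = 0 := by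
  simp [dirDeriv_apply]

lemma MvPolynomial.IsHomogeneous.dirDeriv_eq_C_eval (hf : f.IsHomogeneous 1)
    (h : Fin d → ℂ) : dirDeriv h f = C (eval h f) := by
  simp only [dirDeriv_apply, hf.pderiv_eq_C_eval_single, hf.eval_eq_sum h, map_sum,
    smul_eq_C_mul, map_mul]

lemma MvPolynomial.IsHomogeneous.dirDeriv_pow_eq_zero (hf : f.IsHomogeneous 1)
    (h : Fin d → ℂ) {n : ℕ} (hn : 2 ≤ n) : (dirDeriv h ^ n) f = 0 := by
  obtain ⟨n, rfl⟩ := Nat.exists_eq_add_of_le' hn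
  rw [pow_add, Module.End.mul_apply, sq, Module.End.mul_apply, hf.dirDeriv_eq_C_eval,
    dirDeriv_C, map_zero]

end DirectionalDerivative

lemma mem_Cdeg1_iff {d : ℕ} {ι : Type*} [Fintype ι] {L : ι → ((Fin d → ℂ) →ₗ[ℂ] ℂ)} {k : ℤ}
    (hk : ∀ h : Fin d → ℂ, h ≠ 0 → 0 ≤ (rhoA L h : ℤ) + k) {f : MvPolynomial (Fin d) ℂ} :
    f ∈ Cdeg1 L k ↔
      f.IsHomogeneous 1 ∧ ∀ h : Fin d → ℂ, h ≠ 0 → (rhoA L h : ℤ) + k = 0 → eval h f = 0 := by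
  simp only [Cdeg1, Submodule.mem_inf, mem_homogeneousSubmodule, Submodule.mem_iInf,
    LinearMap.mem_ker]
  refine and_congr_right fun hf => forall₂_congr fun h h0 => ?_
  rcases (hk h h0).eq_or_lt with hρ | hρ
  · simp [← hρ, hf.dirDeriv_eq_C_eval]
  · exact iff_of_true (hf.dirDeriv_pow_eq_zero h (by omega)) fun h' => absurd h' hρ.ne'

section Rho

variable {d : ℕ} {ι κ : Type*} [Fintype ι] [Fintype κ]

lemma rhoA_comp_equiv (L : ι → ((Fin d → ℂ) →ₗ[ℂ] ℂ)) (σ : κ ≃ ι) (h : Fin d → ℂ) :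
    rhoA (L ∘ σ) h = rhoA L h := by
  unfold rhoA
  exact Finset.card_equiv σ (by simp)

open Classical in
lemma rhoA_prod (L : ι × κ → ((Fin d → ℂ) →ₗ[ℂ] ℂ)) (h : Fin d → ℂ) :
    rhoA L h = ∑ a, #{t | L (a, t) h ≠ 0} := by
  simp only [rhoA, Finset.card_filter, Fintype.sum_prod_type]

lemma rhoA_restrict [DecidableEq ι] {d' : ℕ} (L : ι → ((Fin d → ℂ) →ₗ[ℂ] ℂ)) (i₀ : ι)
    (e : (Fin d' → ℂ) →ₗ[ℂ] (Fin d → ℂ)) (he : ∀ u, L i₀ (e u) = 0) (u : Fin d' → ℂ) :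
    rhoA (fun j : {j // j ≠ i₀} => (L j).comp e) u = rhoA L (e u) := by
  unfold rhoA
  refine Finset.card_bij (fun j _ => j.1) (by simp) (fun _ _ _ _ => Subtype.ext) ?_
  simp only [Finset.mem_filter, Finset.mem_univ, true_and]
  exact fun i hi => ⟨⟨i, by rintro rfl; exact hi (he u)⟩, hi, rfl⟩

end Rho

lemma Cdeg1_comp_equiv {d : ℕ} {ι κ : Type*} [Fintype ι] [Fintype κ]
    (L : ι → ((Fin d → ℂ) →ₗ[ℂ] ℂ)) (σ : κ ≃ ι) (k : ℤ) : Cdeg1 (L ∘ σ) k = Cdeg1 L k := by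
  simp only [Cdeg1, rhoA_comp_equiv]

section Pencil

variable {K ι : Type*} [Field K] [DecidableEq K] [Fintype ι] {c : ι → K} {x y : K}

lemma card_filter_add_mul_eq_zero_le_one (hc : Function.Injective c) (hxy : x ≠ 0 ∨ y ≠ 0) :
    #{t | x + c t * y = 0} ≤ 1 := by
  refine Finset.card_le_one.2 fun s hs t ht => hc ?_
  simp only [Finset.mem_filter, Finset.mem_univ, true_and] at hs ht
  have hst : (c s - c t) * y = 0 := by linear_combination hs - ht
  rcases mul_eq_zero.1 hst with hst | rfl
  · exact sub_eq_zero.1 hst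
  · simp_all

lemma card_sub_one_le_card_filter_add_mul_ne_zero (hc : Function.Injective c)
    (hxy : x ≠ 0 ∨ y ≠ 0) : Fintype.card ι - 1 ≤ #{t | x + c t * y ≠ 0} := by
  have hsum := Finset.card_filter_add_card_filter_not (s := Finset.univ)
    (fun t => x + c t * y = 0)
  have := card_filter_add_mul_eq_zero_le_one hc hxy
  rw [Finset.card_univ] at hsum
  simp only [ne_eq]
  omega

end Pencil

lemma Submodule.mem_of_add_smul_mem {K V : Type*} [Field K] [AddCommGroup V] [Module K V]
    {S : Submodule K V} {x y : V} {c c' : K} (hc : c ≠ c') (h : x + c • y ∈ S)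
    (h' : x + c' • y ∈ S) : x ∈ S ∧ y ∈ S := by
  have hy : y ∈ S := by
    have := S.smul_mem (c - c')⁻¹ (S.sub_mem h h')
    rwa [add_sub_add_left_eq_sub, ← sub_smul, smul_smul, inv_mul_cancel₀ (sub_ne_zero.2 hc),
      one_smul] at this
  exact ⟨by simpa using S.sub_mem h (S.smul_mem c hy), hy⟩

lemma span_range_proj_eq_top {R ι : Type*} [CommRing R] [Fintype ι] [DecidableEq ι] :
    Submodule.span R (Set.range fun i : ι => (LinearMap.proj i : (ι → R) →ₗ[R] R)) = ⊤ := by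
  convert (Pi.basisFun R ι).dualBasis.span_eq
  ext i
  simp

section ThreePencils

variable {n : ℕ}

def pencilSlope (t : Fin n) : ℂ := (t : ℕ) + 1

lemma pencilSlope_injective : Function.Injective (pencilSlope (n := n)) := fun s t hst =>
  Fin.ext (by simpa [pencilSlope] using hst)

lemma pencilSlope_ne_zero (t : Fin n) : pencilSlope t ≠ 0 := by
  simpa [pencilSlope] using Nat.cast_add_one_ne_zero (R := ℂ) t

@[simp]
lemma pencilSlope_zero [NeZero n] : pencilSlope (0 : Fin n) = 1 := by
  simp [pencilSlope]

/-- The `a`-th pencil consists of `n` planes through the `a`-th coordinate axis. -/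
noncomputable def threePencils (n : ℕ) (p : Fin 3 × Fin n) : (Fin 3 → ℂ) →ₗ[ℂ] ℂ :=
  LinearMap.proj (p.1 + 1) + pencilSlope p.2 • LinearMap.proj (p.1 + 2)

@[simp]
lemma threePencils_apply (p : Fin 3 × Fin n) (h : Fin 3 → ℂ) :
    threePencils n p h = h (p.1 + 1) + pencilSlope p.2 * h (p.1 + 2) := rfl

def IsOnAxis (h : Fin 3 → ℂ) : Prop := ∃ a : Fin 3, h (a + 1) = 0 ∧ h (a + 2) = 0

lemma rhoA_threePencils (h : Fin 3 → ℂ) :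
    rhoA (threePencils n) h =
      #{t : Fin n | h 1 + pencilSlope t * h 2 ≠ 0} + #{t : Fin n | h 2 + pencilSlope t * h 0 ≠ 0} +
        #{t : Fin n | h 0 + pencilSlope t * h 1 ≠ 0} := by
  rw [rhoA_prod, Fin.sum_univ_three]
  rfl

lemma rhoA_threePencils_of_isOnAxis {h : Fin 3 → ℂ} (hne : h ≠ 0) (hax : IsOnAxis h) :
    rhoA (threePencils n) h = 2 * n := by
  obtain ⟨a, h₁, h₂⟩ := hax
  have h₀ : h a ≠ 0 := fun h₀ => hne (by fin_cases a <;> ext i <;> fin_cases i <;> simp_all)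
  rw [rhoA_threePencils]
  fin_cases a <;> simp_all [pencilSlope_ne_zero] <;> omega

lemma three_mul_sub_one_le_rhoA_threePencils {h : Fin 3 → ℂ} (hax : ¬IsOnAxis h) :
    3 * (n - 1) ≤ rhoA (threePencils n) h := by
  simp only [IsOnAxis, not_exists, not_and_or] at hax
  have hcard {x y : ℂ} (hxy : ¬x = 0 ∨ ¬y = 0) :
      n - 1 ≤ #{t : Fin n | x + pencilSlope t * y ≠ 0} := by
    simpa using card_sub_one_le_card_filter_add_mul_ne_zero pencilSlope_injective hxy
  have h₀ := hcard (x := h 1) (y := h 2) (hax 0)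
  have h₁ := hcard (x := h 2) (y := h 0) (hax 1)
  have h₂ := hcard (x := h 0) (y := h 1) (hax 2)
  rw [rhoA_threePencils]
  omega

lemma two_mul_le_rhoA_threePencils (hn : 3 ≤ n) {h : Fin 3 → ℂ} (hne : h ≠ 0) :
    2 * n ≤ rhoA (threePencils n) h := by
  by_cases hax : IsOnAxis h
  · exact (rhoA_threePencils_of_isOnAxis hne hax).ge
  · have := three_mul_sub_one_le_rhoA_threePencils (n := n) hax
    omega

lemma rhoA_threePencils_eq_iff (hn : 4 ≤ n) {h : Fin 3 → ℂ} (hne : h ≠ 0) :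
    rhoA (threePencils n) h = 2 * n ↔ IsOnAxis h := by
  refine ⟨fun hρ => ?_, rhoA_threePencils_of_isOnAxis hne⟩
  by_contra hax
  have := three_mul_sub_one_le_rhoA_threePencils (n := n) hax
  omega

lemma isOnAxis_pi_single (a : Fin 3) : IsOnAxis (Pi.single a 1) :=
  ⟨a, by fin_cases a <;> simp⟩

lemma Cdeg1_threePencils (hn : 3 ≤ n) : Cdeg1 (threePencils n) (-(2 * n : ℤ)) = ⊥ := by
  have hk (h : Fin 3 → ℂ) (hne : h ≠ 0) : (0 : ℤ) ≤ rhoA (threePencils n) h + -(2 * n : ℤ) := by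
    have := two_mul_le_rhoA_threePencils hn hne
    omega
  have haxis (a : Fin 3) : (rhoA (threePencils n) (Pi.single a 1) : ℤ) + -(2 * n : ℤ) = 0 := by
    rw [rhoA_threePencils_of_isOnAxis (by simp) (isOnAxis_pi_single a)]
    push_cast
    ring
  refine (Submodule.eq_bot_iff _).2 fun f hf => ?_
  obtain ⟨hf, hev⟩ := (mem_Cdeg1_iff hk).1 hf
  rw [hf.eq_sum_C_mul_X]
  simp [hev _ (by simp) (haxis _)]

lemma threePencils_ne_zero (p : Fin 3 × Fin n) : threePencils n p ≠ 0 := by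
  intro hp
  have := LinearMap.congr_fun hp (Pi.single (p.1 + 1) 1)
  obtain ⟨a, t⟩ := p
  fin_cases a <;> simp at this

lemma span_threePencils_image_ne_eq_top (hn : 2 ≤ n) (p₀ : Fin 3 × Fin n) :
    Submodule.span ℂ (threePencils n '' {p | p ≠ p₀}) = ⊤ := by
  set S := Submodule.span ℂ (threePencils n '' {p | p ≠ p₀})
  have hpencil (a : Fin 3) (ha : a ≠ p₀.1) :
      LinearMap.proj (a + 1) ∈ S ∧ LinearMap.proj (a + 2) ∈ S := by
    have hmem (t : Fin n) : threePencils n (a, t) ∈ S :=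
      Submodule.subset_span ⟨(a, t), fun h => ha (congrArg Prod.fst h), rfl⟩
    refine Submodule.mem_of_add_smul_mem ?_ (hmem ⟨0, by omega⟩) (hmem ⟨1, by omega⟩)
    simp [pencilSlope]
  rw [eq_top_iff, ← span_range_proj_eq_top, Submodule.span_le]
  rintro _ ⟨i, rfl⟩
  by_cases hi : i - 1 = p₀.1
  · have hne : i - 2 ≠ p₀.1 := by rw [← hi]; fin_cases i <;> decide
    simpa using (hpencil (i - 2) hne).2
  · simpa using (hpencil (i - 1) hi).1

end ThreePencils

section PlaneEmbedding

noncomputable def planeEmbedding : (Fin 2 → ℂ) →ₗ[ℂ] (Fin 3 → ℂ) :=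
  LinearMap.pi ![LinearMap.proj 0, LinearMap.proj 1, -LinearMap.proj 1]

lemma planeEmbedding_apply (u : Fin 2 → ℂ) : planeEmbedding u = ![u 0, u 1, -u 1] := by
  ext i; fin_cases i <;> rfl

lemma planeEmbedding_injective : Function.Injective planeEmbedding := by
  intro u v huv
  rw [planeEmbedding_apply, planeEmbedding_apply] at huv
  ext i; fin_cases i
  exacts [congrFun huv 0, congrFun huv 1]

lemma planeEmbedding_ne_zero {u : Fin 2 → ℂ} (hu : u ≠ 0) : planeEmbedding u ≠ 0 :=
  (map_ne_zero_iff _ planeEmbedding_injective).2 hu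

lemma threePencils_zero_planeEmbedding {n : ℕ} [NeZero n] (u : Fin 2 → ℂ) :
    threePencils n (0, 0) (planeEmbedding u) = 0 := by
  simp [planeEmbedding_apply]

lemma range_planeEmbedding {n : ℕ} [NeZero n] :
    LinearMap.range planeEmbedding = LinearMap.ker (threePencils n (0, 0)) := by
  refine le_antisymm (fun _ ⟨u, hu⟩ => hu ▸ threePencils_zero_planeEmbedding u)
    fun h hh => ⟨![h 0, h 1], ?_⟩
  have hh : h 1 + h 2 = 0 := by simpa using hh
  ext i
  fin_cases i <;> simp [planeEmbedding_apply]
  linear_combination -hh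

lemma isOnAxis_planeEmbedding_iff (u : Fin 2 → ℂ) : IsOnAxis (planeEmbedding u) ↔ u 1 = 0 := by
  refine ⟨fun ⟨a, h₁, h₂⟩ => ?_, fun h₁ => ⟨0, by simp [planeEmbedding_apply, h₁]⟩⟩
  fin_cases a <;> simp_all [planeEmbedding_apply]

lemma Cdeg1_eq_span_X_one {n : ℕ} (hn : 4 ≤ n) {ι : Type*} [Fintype ι]
    {L : ι → ((Fin 2 → ℂ) →ₗ[ℂ] ℂ)}
    (hL : ∀ u, rhoA L u = rhoA (threePencils n) (planeEmbedding u)) :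
    Cdeg1 L (-(2 * n : ℤ)) = Submodule.span ℂ {X 1} := by
  have hk (u : Fin 2 → ℂ) (hu : u ≠ 0) : (0 : ℤ) ≤ rhoA L u + -(2 * n : ℤ) := by
    have := two_mul_le_rhoA_threePencils (n := n) (by omega) (planeEmbedding_ne_zero hu)
    rw [hL]
    omega
  have hρ {u : Fin 2 → ℂ} (hu : u ≠ 0) : (rhoA L u : ℤ) + -(2 * n : ℤ) = 0 ↔ u 1 = 0 := by
    rw [hL, ← isOnAxis_planeEmbedding_iff,
      ← rhoA_threePencils_eq_iff hn (planeEmbedding_ne_zero hu)]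
    omega
  ext f
  rw [mem_Cdeg1_iff hk, mem_span_X_one_iff]
  refine and_congr_right fun hf => ⟨fun hev => ?_, fun h₀ u hu hu₁ => ?_⟩
  · have h₀ : (Pi.single 0 1 : Fin 2 → ℂ) ≠ 0 := by simp
    exact hev _ h₀ ((hρ h₀).2 (by simp))
  · rw [hf.eval_eq_sum, Fin.sum_univ_two, h₀, (hρ hu).1 hu₁]
    ring

end PlaneEmbedding

lemma Equiv.image_comp_symm_setOf_ne {α β γ : Type*} (f : α → γ) (σ : α ≃ β) (a : α) :
    (f ∘ σ.symm) '' {b | b ≠ σ a} = f '' {a' | a' ≠ a} := by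
  rw [Set.image_comp, Equiv.image_eq_preimage_symm]
  ext
  simp

lemma not_exists_surjective_of_eq_bot_of_ne_bot {R M N : Type*} [Semiring R] [AddCommMonoid M]
    [Module R M] [AddCommMonoid N] [Module R N] {P : Submodule R M} {Q : Submodule R N}
    (hP : P = ⊥) (hQ : Q ≠ ⊥) : ¬∃ T : P →ₗ[R] Q, Function.Surjective T := by
  rintro ⟨T, hT⟩
  have := Submodule.subsingleton_iff_eq_bot.2 hP
  have := Submodule.nontrivial_iff_ne_bot.2 hQ
  exact not_subsingleton Q hT.subsingleton

/-- there is a central arrangement 𝒜 in ℂ³ and a hyperplane H ∈ 𝒜, neither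
a loop nor a coloop, such that for k = −2m ≤ −6 both 𝒜 and the contraction 𝒜/H (an
arrangement in H ≅ ℂ², obtained by restricting the other forms along a parametrization
of H) have ρ = 2m, yet dim (C_{𝒜,k})₁ = 0 while dim (C_{𝒜/H,k})₁ = 1; consequently
there is no surjection (C_{𝒜,k})₁ → (C_{𝒜/H,k})₁, so no degree-preserving surjection
C_{𝒜,k} → C_{𝒜/H,k} exists and the deletion–contraction sequence is not exact. -/
theorem stmt_12 :
    ∃ (m : ℕ), 3 ≤ m ∧
    ∃ (F : Fin (3 * m) → ((Fin 3 → ℂ) →ₗ[ℂ] ℂ)) (i₀ : Fin (3 * m)),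
      (∀ i, F i ≠ 0) ∧
      -- H = ker (F i₀) is not a coloop: the remaining forms still have full rank
      Submodule.span ℂ (F '' {j | j ≠ i₀}) = ⊤ ∧
      ∃ e : (Fin 2 → ℂ) →ₗ[ℂ] (Fin 3 → ℂ), Function.Injective e ∧
        LinearMap.range e = LinearMap.ker (F i₀) ∧
        -- contraction 𝒜/H: the forms F j (j ≠ i₀) restricted to H
        ((∀ h : Fin 3 → ℂ, h ≠ 0 → 2 * m ≤ rhoA F h) ∧
         (∃ h : Fin 3 → ℂ, h ≠ 0 ∧ rhoA F h = 2 * m) ∧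
         (∀ h : Fin 2 → ℂ, h ≠ 0 →
            2 * m ≤ rhoA (fun j : {j // j ≠ i₀} => (F j.1).comp e) h) ∧
         (∃ h : Fin 2 → ℂ, h ≠ 0 ∧
            rhoA (fun j : {j // j ≠ i₀} => (F j.1).comp e) h = 2 * m) ∧
         Module.finrank ℂ (Cdeg1 F (-(2 * m : ℤ))) = 0 ∧
         Module.finrank ℂ
            (Cdeg1 (fun j : {j // j ≠ i₀} => (F j.1).comp e) (-(2 * m : ℤ))) = 1 ∧
         ¬∃ T : Cdeg1 F (-(2 * m : ℤ)) →ₗ[ℂ]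
              Cdeg1 (fun j : {j // j ≠ i₀} => (F j.1).comp e) (-(2 * m : ℤ)),
            Function.Surjective T) := by
  set F := threePencils 4 ∘ finProdFinEquiv.symm
  set i₀ := finProdFinEquiv ((0, 0) : Fin 3 × Fin 4)
  have hFi₀ : F i₀ = threePencils 4 (0, 0) := by simp [F, i₀]
  have hρ (h : Fin 3 → ℂ) : rhoA F h = rhoA (threePencils 4) h := rhoA_comp_equiv _ _ h
  have hρ' (u : Fin 2 → ℂ) : rhoA (fun j : {j // j ≠ i₀} => (F j.1).comp planeEmbedding) u =
      rhoA (threePencils 4) (planeEmbedding u) := by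
    rw [rhoA_restrict _ _ _ fun u => hFi₀ ▸ threePencils_zero_planeEmbedding u, hρ]
  have hbot : Cdeg1 F (-(2 * (4 : ℕ) : ℤ)) = ⊥ := by
    rw [Cdeg1_comp_equiv, Cdeg1_threePencils (by norm_num)]
  have hspan := Cdeg1_eq_span_X_one (by norm_num) hρ'
  have he₀ : (Pi.single 0 1 : Fin 2 → ℂ) ≠ 0 := by simp
  refine ⟨4, by norm_num, F, i₀, fun _ => threePencils_ne_zero _, ?_, planeEmbedding,
    planeEmbedding_injective, hFi₀ ▸ range_planeEmbedding, fun h hh => ?_, ⟨Pi.single 0 1, ?_⟩,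
    fun u hu => ?_, ⟨Pi.single 0 1, he₀, ?_⟩, by rw [hbot, finrank_bot],
    by rw [hspan, finrank_span_singleton (X_ne_zero 1)],
    not_exists_surjective_of_eq_bot_of_ne_bot hbot (hspan ▸ ?_)⟩
  · rw [Equiv.image_comp_symm_setOf_ne, span_threePencils_image_ne_eq_top (by norm_num)]
  · exact hρ h ▸ two_mul_le_rhoA_threePencils (by norm_num) hh
  · exact ⟨by simp, hρ _ ▸ rhoA_threePencils_of_isOnAxis (by simp) (isOnAxis_pi_single 0)⟩
  · exact hρ' u ▸ two_mul_le_rhoA_threePencils (by norm_num) (planeEmbedding_ne_zero hu)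
  · rw [hρ', rhoA_threePencils_eq_iff (by norm_num) (planeEmbedding_ne_zero he₀),
      isOnAxis_planeEmbedding_iff]
    simp
  · exact Submodule.span_singleton_eq_bot.not.2 (X_ne_zero 1)
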